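/- arXiv:1711.08049 — 7 statements merged into one kernel-verified Lean document; each statement's English description precedes it below -/
import Mathlib

section
/- Let α, β : ℝ → ℝ, μ ∈ ℝ, and φ : ℝ → ℝ satisfy the eigenvalue equation α(x)(φ(−x)−φ(x)) + β(x)(φ(−x−1)−φ(x)) = μ·φ(x) for all x. Define χ(x) = φ(x) − φ(−x) and χ̃(x) = β(−x−1)φ(x) + β(x)φ(−x−1). Then for all x: α(x)β(−x−1)χ(x) + α(−x−1)β(x)χ(−x−1) + μ·χ̃(x) = 0. -/
/-- If φ is an eigenfunction of the Dunkl shift operator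
H = α(x)(R−I)+β(x)(TR−I) with eigenvalue μ, and χ(x) = φ(x)−φ(−x),
χ̃(x) = β(−x−1)φ(x)+β(x)φ(−x−1), then
α(x)β(−x−1)χ(x) + α(−x−1)β(x)χ(−x−1) + μ·χ̃(x) = 0. -/
theorem stmt_3 (α β φ : ℝ → ℝ) (μ : ℝ)
    (heig : ∀ x : ℝ, α x * (φ (-x) - φ x) + β x * (φ (-x-1) - φ x) = μ * φ x) :
    ∀ x : ℝ,
      α x * β (-x-1) * (φ x - φ (-x)) +
      α (-x-1) * β x * (φ (-x-1) - φ (-(-x-1))) +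
      μ * (β (-x-1) * φ x + β x * φ (-x-1)) = 0 := by
  intro x
  have h1 := heig x
  have h2 := heig (-x-1)
  have e1 : -(-x-1) = x + 1 := by ring
  have e2 : -(-x-1)-1 = x := by ring
  rw [e1, show x+(1:ℝ)-1 = x from by ring] at h2
  rw [e1]
  linear_combination (-β (-x-1)) * h1 - β x * h2
end

section
/- Let α, β : ℝ → ℝ, μ ∈ ℝ, and φ satisfy α(x)(φ(−x)−φ(x)) + β(x)(φ(−x−1)−φ(x)) = μ·φ(x) for all x, and assume β satisfies β(−x)+β(x−1) = β(x)+β(−x−1) for all x. With χ(x) = φ(x)−φ(−x) and χ̃(x) = β(−x−1)φ(x)+β(x)φ(−x−1), it holds for all x that χ̃(−x) − χ̃(x) = −χ(x)·(μ + α(x) + α(−x) + β(x) + β(−x−1)). -/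
/-- Identity (2.6): χ̃(−x) − χ̃(x) = −χ(x)·(μ+α(x)+α(−x)+β(x)+β(−x−1)),
under the eigenvalue equation and the symmetry condition on β. -/
theorem stmt_4 (α β φ : ℝ → ℝ) (μ : ℝ)
    (heig : ∀ x : ℝ, α x * (φ (-x) - φ x) + β x * (φ (-x-1) - φ x) = μ * φ x)
    (hβ : ∀ x : ℝ, β (-x) + β (x-1) = β x + β (-x-1)) :
    ∀ x : ℝ,
      (β (x-1) * φ (-x) + β (-x) * φ (x-1)) -
      (β (-x-1) * φ x + β x * φ (-x-1)) =
      -(φ x - φ (-x)) * (μ + α x + α (-x) + β x + β (-x-1)) := by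
  intro x
  have h1 := heig x
  have h2 := heig (-x)
  simp only [neg_neg] at h2
  linear_combination -h1 + h2 + φ (-x) * hβ x
end

section
/- Suppose ξ : ℝ → ℝ is nonvanishing and satisfies ξ(−x)/ξ(x) = (x−kρ₁)(x−ρ₂/k)/((x−ρ₁)(x−ρ₂)) for all x where defined, with ρ₁ρ₂ ≠ 0 and k ≠ 0. Then k² = 1 or k² = ρ₂²/ρ₁². -/
/-!
Multiplying the relation at `x` and at `-x` kills `ξ`, leaving
`(x² - k²ρ₁²)(x² - ρ₂²/k²) = (x² - ρ₁²)(x² - ρ₂²)`.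
The constant terms agree identically, so at a single `x ≠ 0` the `x²`-coefficients must agree:
`k²ρ₁² + ρ₂²/k² = ρ₁² + ρ₂²`, which after multiplying by `k²` factors as
`(k² - 1)(k²ρ₁² - ρ₂²) = 0`.
-/

section GaugeFactor

variable {K : Type*} [Field K]

lemma quartic_eq_of_ratio_mul_ratio_neg_eq_one {ρ₁ ρ₂ k x : K}
    (h₁ : (x - ρ₁) * (x - ρ₂) ≠ 0) (h₂ : (-x - ρ₁) * (-x - ρ₂) ≠ 0)
    (h : (x - k * ρ₁) * (x - ρ₂ / k) / ((x - ρ₁) * (x - ρ₂)) *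
      ((-x - k * ρ₁) * (-x - ρ₂ / k) / ((-x - ρ₁) * (-x - ρ₂))) = 1) :
    (x ^ 2 - k ^ 2 * ρ₁ ^ 2) * (x ^ 2 - (ρ₂ / k) ^ 2) = (x ^ 2 - ρ₁ ^ 2) * (x ^ 2 - ρ₂ ^ 2) := by
  rw [div_mul_div_comm, div_eq_one_iff_eq (mul_ne_zero h₁ h₂)] at h
  linear_combination h

lemma sq_sub_one_mul_eq_zero_of_quartic_eq {ρ₁ ρ₂ k x : K} (hk : k ≠ 0) (hx : x ≠ 0)
    (h : (x ^ 2 - k ^ 2 * ρ₁ ^ 2) * (x ^ 2 - (ρ₂ / k) ^ 2) =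
      (x ^ 2 - ρ₁ ^ 2) * (x ^ 2 - ρ₂ ^ 2)) :
    (k ^ 2 - 1) * (k ^ 2 * ρ₁ ^ 2 - ρ₂ ^ 2) = 0 := by
  have hcoeff : x ^ 2 * (k ^ 2 * ρ₁ ^ 2 + (ρ₂ / k) ^ 2 - ρ₁ ^ 2 - ρ₂ ^ 2) = 0 := by
    field_simp at h ⊢
    linear_combination -h
  have hsum : k ^ 2 * ρ₁ ^ 2 + (ρ₂ / k) ^ 2 - ρ₁ ^ 2 - ρ₂ ^ 2 = 0 :=
    (mul_eq_zero.mp hcoeff).resolve_left (pow_ne_zero 2 hx)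
  calc (k ^ 2 - 1) * (k ^ 2 * ρ₁ ^ 2 - ρ₂ ^ 2)
      = k ^ 2 * (k ^ 2 * ρ₁ ^ 2 + (ρ₂ / k) ^ 2 - ρ₁ ^ 2 - ρ₂ ^ 2) := by field_simp; ring
    _ = 0 := by rw [hsum, mul_zero]

end GaugeFactor

/-- If ξ is nonvanishing and ξ(−x)/ξ(x) = (x−kρ₁)(x−ρ₂/k)/((x−ρ₁)(x−ρ₂))
wherever the denominator is nonzero, with ρ₁ρ₂ ≠ 0 and k ≠ 0, then
k² = 1 or k² = ρ₂²/ρ₁². -/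
theorem stmt_8 (ξ : ℝ → ℝ) (ρ₁ ρ₂ k : ℝ)
    (hξ : ∀ x : ℝ, ξ x ≠ 0)
    (hρ : ρ₁ * ρ₂ ≠ 0) (hk : k ≠ 0)
    (h : ∀ x : ℝ, (x-ρ₁)*(x-ρ₂) ≠ 0 →
      ξ (-x) / ξ x = (x - k*ρ₁)*(x - ρ₂/k)/((x-ρ₁)*(x-ρ₂))) :
    k^2 = 1 ∨ k^2 = ρ₂^2/ρ₁^2 := by
  obtain ⟨x, hx⟩ := Infinite.exists_notMem_finset ({0, ρ₁, -ρ₁, ρ₂, -ρ₂} : Finset ℝ)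
  simp only [Finset.mem_insert, Finset.mem_singleton, not_or] at hx
  obtain ⟨hx0, hx₁, hx₁', hx₂, hx₂'⟩ := hx
  have h₁ : (x - ρ₁) * (x - ρ₂) ≠ 0 := mul_ne_zero (sub_ne_zero.mpr hx₁) (sub_ne_zero.mpr hx₂)
  have h₂ : (-x - ρ₁) * (-x - ρ₂) ≠ 0 :=
    mul_ne_zero (sub_ne_zero.mpr fun e => hx₁' (by linarith))
      (sub_ne_zero.mpr fun e => hx₂' (by linarith))
  have hprod : ξ (-x) / ξ x * (ξ (-(-x)) / ξ (-x)) = 1 := by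
    rw [neg_neg, div_mul_div_cancel₀ (hξ x), div_self (hξ (-x))]
  rw [h x h₁, h (-x) h₂] at hprod
  rcases mul_eq_zero.mp (sq_sub_one_mul_eq_zero_of_quartic_eq hk hx0
      (quartic_eq_of_ratio_mul_ratio_neg_eq_one h₁ h₂ hprod)) with hk₁ | hkρ
  · exact Or.inl (sub_eq_zero.mp hk₁)
  · exact Or.inr ((eq_div_iff (pow_ne_zero 2 (left_ne_zero_of_mul hρ))).mpr (sub_eq_zero.mp hkρ))
end

section
/- Let α(x) = (x−ρ₁)(x−ρ₂)/(−2x), β(x) = (x−r₁+1/2)(x−r₂+1/2)/(2x+1), and suppose ξ : ℝ → ℝ satisfies ξ(−x)/ξ(x) = (x−ρ₁')(x−ρ₂')/((x−ρ₁)(x−ρ₂)) and ξ(−x−1)/ξ(x) = (x−r₁'+1/2)(x−r₂'+1/2)/((x−r₁+1/2)(x−r₂+1/2)) for all x where defined. If α(x)(ξ(−x)/ξ(x)−1) + β(x)(ξ(−x−1)/ξ(x)−1) is constant in x, then ρ₁'ρ₂' = ρ₁ρ₂ and r₁'r₂' = r₁r₂, and the constant equals −(ρ₁+ρ₂−ρ₁'−ρ₂')/2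 + (r₁+r₂−r₁'−r₂')/2. -/
set_option maxRecDepth 8000
set_option maxHeartbeats 1000000

lemma quad_coeffs_zero (a b d : ℝ) (S : Set ℝ) (hS : S.Finite)
    (h : ∀ x : ℝ, x ∉ S → a*x^2 + b*x + d = 0) :
    a = 0 ∧ b = 0 ∧ d = 0 := by
  set p : Polynomial ℝ := Polynomial.C a * Polynomial.X^2 +
      Polynomial.C b * Polynomial.X + Polynomial.C d with hp
  have hpz : p = 0 := by
    apply Polynomial.eq_zero_of_infinite_isRoot
    apply Set.Infinite.mono (s := Sᶜ)
    · intro x hx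
      have := h x hx
      simp only [Set.mem_setOf_eq, Polynomial.IsRoot, hp, Polynomial.eval_add,
        Polynomial.eval_mul, Polynomial.eval_pow, Polynomial.eval_C, Polynomial.eval_X]
      linarith
    · exact hS.infinite_compl
  refine ⟨?_, ?_, ?_⟩
  · have := congrArg (fun q => Polynomial.coeff q 2) hpz
    simpa [hp] using this
  · have := congrArg (fun q => Polynomial.coeff q 1) hpz
    simpa [hp] using this
  · have := congrArg (fun q => Polynomial.coeff q 0) hpz
    simpa [hp] using this

/-- Lemma 3.1 (first case): if the gauge factor ξ satisfies the two ratio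
relations and the combination α(x)(ξ(−x)/ξ(x)−1)+β(x)(ξ(−x−1)/ξ(x)−1) is
constant (equal to c), then ρ₁'ρ₂' = ρ₁ρ₂, r₁'r₂' = r₁r₂ and
c = −(ρ₁+ρ₂−ρ₁'−ρ₂')/2 + (r₁+r₂−r₁'−r₂')/2. -/
theorem stmt_9 (ξ : ℝ → ℝ) (ρ₁ ρ₂ r₁ r₂ ρ₁' ρ₂' r₁' r₂' c : ℝ)
    (hξ : ∀ x : ℝ, ξ x ≠ 0)
    (h1 : ∀ x : ℝ, (x-ρ₁)*(x-ρ₂) ≠ 0 →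
      ξ (-x) / ξ x = (x-ρ₁')*(x-ρ₂')/((x-ρ₁)*(x-ρ₂)))
    (h2 : ∀ x : ℝ, (x-r₁+1/2)*(x-r₂+1/2) ≠ 0 →
      ξ (-x-1) / ξ x = (x-r₁'+1/2)*(x-r₂'+1/2)/((x-r₁+1/2)*(x-r₂+1/2)))
    (hc : ∀ x : ℝ, x ≠ 0 → 2*x+1 ≠ 0 →
      (x-ρ₁)*(x-ρ₂) ≠ 0 → (x-r₁+1/2)*(x-r₂+1/2) ≠ 0 →
      (x-ρ₁)*(x-ρ₂)/(-2*x) * (ξ (-x) / ξ x - 1) +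
      (x-r₁+1/2)*(x-r₂+1/2)/(2*x+1) * (ξ (-x-1) / ξ x - 1) = c) :
    ρ₁' * ρ₂' = ρ₁ * ρ₂ ∧ r₁' * r₂' = r₁ * r₂ ∧
      c = -(ρ₁+ρ₂-ρ₁'-ρ₂')/2 + (r₁+r₂-r₁'-r₂')/2 := by
  have hfin : ({0, -1/2, ρ₁, ρ₂, r₁-1/2, r₂-1/2} : Set ℝ).Finite :=
    Set.finite_singleton _ |>.insert _ |>.insert _ |>.insert _ |>.insert _ |>.insert _
  have key : ∀ x : ℝ, x ∉ ({0, -1/2, ρ₁, ρ₂, r₁-1/2, r₂-1/2} : Set ℝ) →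
      (-2*(ρ₁+ρ₂-ρ₁'-ρ₂') + 2*(r₁+r₂-r₁'-r₂') - 4*c)*x^2 +
      (-(ρ₁+ρ₂-ρ₁'-ρ₂') - 2*(ρ₁'*ρ₂'-ρ₁*ρ₂) + 2*(r₁'*r₂'-r₁*r₂) + (r₁+r₂-r₁'-r₂') - 2*c)*x +
      (-(ρ₁'*ρ₂'-ρ₁*ρ₂)) = 0 := by
    intro x hx
    simp only [Set.mem_insert_iff, Set.mem_singleton_iff, not_or] at hx
    obtain ⟨hx0, hxh, hxρ1, hxρ2, hxr1, hxr2⟩ := hx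
    have h2x : 2*x+1 ≠ 0 := by intro h; apply hxh; linarith
    have h1' : x - ρ₁ ≠ 0 := sub_ne_zero.mpr hxρ1
    have h2' : x - ρ₂ ≠ 0 := sub_ne_zero.mpr hxρ2
    have h3' : x - r₁ + 1/2 ≠ 0 := fun h => hxr1 (by linarith)
    have h4' : x - r₂ + 1/2 ≠ 0 := fun h => hxr2 (by linarith)
    have hd1 : (x-ρ₁)*(x-ρ₂) ≠ 0 := mul_ne_zero h1' h2'
    have hd2 : (x-r₁+1/2)*(x-r₂+1/2) ≠ 0 := mul_ne_zero h3' h4'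
    have hne1 : (-2*x : ℝ) ≠ 0 := by simpa using hx0
    have hcx := hc x hx0 h2x hd1 hd2
    rw [h1 x hd1, h2 x hd2] at hcx
    have k1 : (x-ρ₁)*(x-ρ₂)/(-2*x) * ((x-ρ₁')*(x-ρ₂')/((x-ρ₁)*(x-ρ₂)) - 1)
        = ((x-ρ₁')*(x-ρ₂') - (x-ρ₁)*(x-ρ₂))/(-2*x) := by
      rw [div_mul_eq_mul_div, mul_sub, mul_one,
        mul_div_cancel₀ _ hd1]
    have k2 : (x-r₁+1/2)*(x-r₂+1/2)/(2*x+1) *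
          ((x-r₁'+1/2)*(x-r₂'+1/2)/((x-r₁+1/2)*(x-r₂+1/2)) - 1)
        = ((x-r₁'+1/2)*(x-r₂'+1/2) - (x-r₁+1/2)*(x-r₂+1/2))/(2*x+1) := by
      rw [div_mul_eq_mul_div, mul_sub, mul_one,
        mul_div_cancel₀ _ hd2]
    rw [k1, k2, div_add_div _ _ hne1 h2x, div_eq_iff (mul_ne_zero hne1 h2x)] at hcx
    linear_combination -hcx
  obtain ⟨e2, e1, e0⟩ := quad_coeffs_zero _ _ _ _ hfin key
  exact ⟨by linarith, by linarith, by linarith⟩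
end

section
/- Let μ₁, …, μ_n, μ_m be pairwise distinct reals and let χ̃₁, …, χ̃_n, χ̃_m : ℝ → ℝ be functions. Suppose for 2 ≤ k ≤ n the recursions χ̃^{(k)}_j(x) = (μ_j − μ_{k−1})·χ̃^{(k−1)}_j(x)/χ̃^{(k−1)}_{k−1}(x) hold, where χ̃^{(1)}_j = χ̃_j, and all denominators are nonzero. Then χ̃^{(n)}_m(x) = (∏_{j=1}^{n−1}(μ_m−μ_j) / ∏_{k=1}^{n−2}(μ_{n−1}−μ_k)) · χ̃_m(x)/χ̃_{n−1}(x). -/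
/-!
Writing the recursion as `χ (k+1) j = (μ j - μ k) * χ k j / χ k k`, one shows by induction that
`χ (n+2) m` is `∏_{j ≤ n+1} (μ m - μ j) * χ 1 m` divided by the same expression at `m = n + 1`:
in the inductive step the common denominator of `χ (n+2) m` and `χ (n+2) (n+2)` cancels, which is
legitimate because `χ (n+2) (n+2) ≠ 0` forces that denominator to be nonzero.
-/

open Finset

section Recursion

variable {K : Type*} [Field K] (μ : ℕ → K) (χ : ℕ → ℕ → K)

theorem eq_prod_div_prod_of_recursion (n m : ℕ)
    (hden : ∀ k ∈ Icc 1 (n + 1), χ k k ≠ 0)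
    (hrec : ∀ k ∈ Icc 1 (n + 1), ∀ j, χ (k + 1) j = (μ j - μ k) * χ k j / χ k k) :
    χ (n + 2) m =
      (∏ j ∈ Icc 1 (n + 1), (μ m - μ j)) / (∏ k ∈ Icc 1 n, (μ (n + 1) - μ k)) *
        (χ 1 m / χ 1 (n + 1)) := by
  induction n generalizing m with
  | zero =>
    rw [hrec 1 (by simp) m]
    simp only [zero_add, Icc_self, prod_singleton, Icc_eq_empty_of_lt one_pos, prod_empty]
    ring
  | succ n ih =>
    have ih' (j : ℕ) := ih j (fun k hk => hden k (Icc_subset_Icc_right (by omega) hk))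
      (fun k hk => hrec k (Icc_subset_Icc_right (by omega) hk))
    have hpivot : χ (n + 2) (n + 2) ≠ 0 := hden (n + 2) (by simp)
    rw [ih' (n + 2)] at hpivot
    rw [hrec (n + 2) (by simp) m, ih' m, ih' (n + 2)]
    rw [prod_Icc_succ_top (by omega : 1 ≤ n + 2) (fun j => μ m - μ j)]
    have hq : ∏ k ∈ Icc 1 n, (μ (n + 1) - μ k) ≠ 0 := by rintro h; simp [h] at hpivot
    have hc : χ 1 (n + 1) ≠ 0 := by rintro h; simp [h] at hpivot
    have hb : ∏ j ∈ Icc 1 (n + 1), (μ (n + 2) - μ j) ≠ 0 := by rintro h; simp [h] at hpivot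
    have hc' : χ 1 (n + 2) ≠ 0 := by rintro h; simp [h] at hpivot
    field_simp

end Recursion

theorem stmt_15_general (n m : ℕ) (hn : 2 ≤ n) (μ : ℕ → ℝ) (χ : ℕ → ℕ → ℝ → ℝ) (x : ℝ)
    (hden : ∀ k, 1 ≤ k → k ≤ n - 1 → χ k k x ≠ 0)
    (hrec : ∀ k, 2 ≤ k → k ≤ n → ∀ j,
      χ k j x = (μ j - μ (k-1)) * χ (k-1) j x / χ (k-1) (k-1) x) :
    χ n m x =
      ((∏ j ∈ Finset.Icc 1 (n-1), (μ m - μ j)) /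
       (∏ k ∈ Finset.Icc 1 (n-2), (μ (n-1) - μ k))) *
      (χ 1 m x / χ 1 (n-1) x) := by
  obtain ⟨n, rfl⟩ : ∃ n', n = n' + 2 := ⟨n - 2, by omega⟩
  refine eq_prod_div_prod_of_recursion μ (fun k j => χ k j x) n m
    (fun k hk => hden k (mem_Icc.1 hk).1 (by simpa using (mem_Icc.1 hk).2)) fun k hk j => ?_
  simpa using hrec (k + 1) (by simp at hk; omega) (by simp at hk; omega) j

/-- Closed form of the recursion
χ̃^{(k)}_j(x) = (μ_j − μ_{k−1})·χ̃^{(k−1)}_j(x)/χ̃^{(k−1)}_{k−1}(x):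
χ̃^{(n)}_m(x) = (∏_{j=1}^{n−1}(μ_m−μ_j)/∏_{k=1}^{n−2}(μ_{n−1}−μ_k))
· χ̃^{(1)}_m(x)/χ̃^{(1)}_{n−1}(x). -/
theorem stmt_15 (n m : ℕ) (hn : 2 ≤ n) (μ : ℕ → ℝ) (χ : ℕ → ℕ → ℝ → ℝ) (x : ℝ)
    (hdist : ∀ i ∈ insert m (Finset.Icc 1 n), ∀ j ∈ insert m (Finset.Icc 1 n),
      i ≠ j → μ i ≠ μ j)
    (hden : ∀ k, 1 ≤ k → k ≤ n - 1 → χ k k x ≠ 0)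
    (hrec : ∀ k, 2 ≤ k → k ≤ n → ∀ j,
      χ k j x = (μ j - μ (k-1)) * χ (k-1) j x / χ (k-1) (k-1) x) :
    χ n m x =
      ((∏ j ∈ Finset.Icc 1 (n-1), (μ m - μ j)) /
       (∏ k ∈ Finset.Icc 1 (n-2), (μ (n-1) - μ k))) *
      (χ 1 m x / χ 1 (n-1) x) :=
  stmt_15_general n m hn μ χ x hden hrec
end

section
/- Let ω : ℝ → ℝ be a weight supported on a countable set χ ⊂ ℝ, and let F, G, C : ℝ → ℝ satisfy ω(x)F(x) = ω(−x)F(−x) and ω(x)G(x) = ω(−x−1)G(−x−1) for all x ∈ ℝ, together with the boundary conditions F(x) = 0 for x ∈ χ \ (−χ) and G(x) = 0 for x ∈ χ \ (−χ−1). Then the Dunkl shift operator L[f](x) = F(x)f(−x) + G(x)f(−x−1) + C(x)f(x) is symmetric with respect to the bilinear form ⟨p,q⟩ = Σ_{x∈χ} ω(x)p(x)q(x), i.e. ⟨L[p], q⟩ = ⟨p, L[q]⟩ for all functions p, q (assuming absolute summability). -/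
lemma key_involutive (χ : Set ℝ) (ω F : ℝ → ℝ) (σ : ℝ → ℝ)
    (hσ : Function.Involutive σ)
    (hF : ∀ x : ℝ, ω x * F x = ω (σ x) * F (σ x))
    (hb : ∀ x ∈ χ, σ x ∉ χ → F x = 0) (p q : ℝ → ℝ) :
    (∑' x : χ, ω x * F x * p (σ x) * q x) = ∑' x : χ, ω x * F x * q (σ x) * p x := by
  rw [tsum_subtype χ (fun y => ω y * F y * p (σ y) * q y), tsum_subtype χ (fun y => ω y * F y * q (σ y) * p y)]
  rw [← (hσ.toPerm σ).tsum_eq (χ.indicator fun y => ω y * F y * p (σ y) * q y)]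
  apply tsum_congr
  intro x
  simp only [Function.Involutive.coe_toPerm]
  by_cases hx : x ∈ χ
  · by_cases hσx : σ x ∈ χ
    · rw [Set.indicator_of_mem hσx, Set.indicator_of_mem hx, hσ x]
      rw [← hF x]
      ring
    · rw [Set.indicator_of_notMem hσx, Set.indicator_of_mem hx, hb x hx hσx]
      ring
  · by_cases hσx : σ x ∈ χ
    · rw [Set.indicator_of_mem hσx, Set.indicator_of_notMem hx]
      rw [hb (σ x) hσx (by rwa [hσ x])]
      ring
    · rw [Set.indicator_of_notMem hσx, Set.indicator_of_notMem hx]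

/-- Lemma 4.7: under the weight relations and boundary conditions, the Dunkl
shift operator L[f](x) = F(x)f(−x) + G(x)f(−x−1) + C(x)f(x) is symmetric with
respect to ⟨p,q⟩ = Σ_{x∈χ} ω(x)p(x)q(x). -/
theorem stmt_17 (χ : Set ℝ) (hχ : χ.Countable) (ω F G C : ℝ → ℝ)
    (hF : ∀ x : ℝ, ω x * F x = ω (-x) * F (-x))
    (hG : ∀ x : ℝ, ω x * G x = ω (-x-1) * G (-x-1))
    (hbF : ∀ x ∈ χ, -x ∉ χ → F x = 0)
    (hbG : ∀ x ∈ χ, -x-1 ∉ χ → G x = 0)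
    (p q : ℝ → ℝ)
    (sF : Summable (fun x : χ => ω x * F x * p (-(x:ℝ)) * q x))
    (sG : Summable (fun x : χ => ω x * G x * p (-(x:ℝ)-1) * q x))
    (sF' : Summable (fun x : χ => ω x * F x * q (-(x:ℝ)) * p x))
    (sG' : Summable (fun x : χ => ω x * G x * q (-(x:ℝ)-1) * p x))
    (sC : Summable (fun x : χ => ω x * C x * p x * q x)) :
    (∑' x : χ, ω x * (F x * p (-(x:ℝ)) + G x * p (-(x:ℝ)-1) + C x * p x) * q x) =
      ∑' x : χ, ω x * p x * (F x * q (-(x:ℝ)) + G x * q (-(x:ℝ)-1) + C x * q x) := by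
  have hL : (∑' x : χ, ω x * (F x * p (-(x:ℝ)) + G x * p (-(x:ℝ)-1) + C x * p x) * q x)
      = (∑' x : χ, ω x * F x * p (-(x:ℝ)) * q x)
        + ((∑' x : χ, ω x * G x * p (-(x:ℝ)-1) * q x)
          + (∑' x : χ, ω x * C x * p x * q x)) := by
    rw [← Summable.tsum_add sG sC, ← Summable.tsum_add sF (sG.add sC)]
    exact tsum_congr fun x => by ring
  have hR : (∑' x : χ, ω x * p x * (F x * q (-(x:ℝ)) + G x * q (-(x:ℝ)-1) + C x * q x))
      = (∑' x : χ, ω x * F x * q (-(x:ℝ)) * p x)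
        + ((∑' x : χ, ω x * G x * q (-(x:ℝ)-1) * p x)
          + (∑' x : χ, ω x * C x * p x * q x)) := by
    rw [← Summable.tsum_add sG' sC, ← Summable.tsum_add sF' (sG'.add sC)]
    exact tsum_congr fun x => by ring
  rw [hL, hR]
  have h1 : (∑' x : χ, ω x * F x * p (-(x:ℝ)) * q x)
      = ∑' x : χ, ω x * F x * q (-(x:ℝ)) * p x :=
    key_involutive χ ω F (fun y => -y) (fun y => by simp) hF hbF p q
  have h2 : (∑' x : χ, ω x * G x * p (-(x:ℝ)-1) * q x)
      = ∑' x : χ, ω x * G x * q (-(x:ℝ)-1) * p x :=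
    key_involutive χ ω G (fun y => -y-1) (fun y => by ring) hG hbG p q
  rw [h1, h2]
end

section
/- Let ω, F, G : ℝ → ℝ satisfy ω(x)F(x) = ω(−x)F(−x) and ω(x)G(x) = ω(−x−1)G(−x−1) for all x ∈ ℝ. Then for all x where ω(x), F(x+1), G(−x−1) are nonzero: ω(x+1)/ω(x) = F(−x−1)G(x)/(F(x+1)G(−x−1)). -/
/-- Lemma 4.8: the Pearson-type recurrence
ω(x+1)/ω(x) = F(−x−1)G(x)/(F(x+1)G(−x−1)). -/
theorem stmt_18 (ω F G : ℝ → ℝ)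
    (hF : ∀ x : ℝ, ω x * F x = ω (-x) * F (-x))
    (hG : ∀ x : ℝ, ω x * G x = ω (-x-1) * G (-x-1)) :
    ∀ x : ℝ, ω x ≠ 0 → F (x+1) ≠ 0 → G (-x-1) ≠ 0 →
      ω (x+1) / ω x = F (-x-1) * G x / (F (x+1) * G (-x-1)) := by
  intro x hω hF1 hG1
  have h1 := hF (x+1)
  have h2 := hG x
  have e : -(x+1) = -x-1 := by ring
  rw [e] at h1
  field_simp
  linear_combination G (-x-1) * h1 - F (-x-1) * h2
end
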